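/- arXiv:2302.11619 — 4 statements merged into one kernel-verified Lean document; each statement's English description precedes it below -/
import Mathlib

section
/- Let G be a finite simple graph with a linear order on its vertices (identify vertices with 1,…,n). There exist vertices k < j < i with ki ∈ E, ji ∈ E, and kj ∉ E if and only if there exist vertices k < j < i such that j is the maximum element of the left-neighborhood N⁻(i) = {x < i : xi ∈ E}, ki ∈ E, and kj ∉ E. (I.e., to detect the chordal pattern it suffices to check each vertex against its rightmost left-neighbor.) -/
lemma stmt_1_aux {n : ℕ} (G : SimpleGraph (Fin n)) :
    ∀ i k j : Fin n, k < j → j < i → G.Adj k i → G.Adj j i → ¬ G.Adj k j →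
      ∃ k' j' i' : Fin n, k' < j' ∧ j' < i' ∧
        IsGreatest {x : Fin n | x < i' ∧ G.Adj x i'} j' ∧ G.Adj k' i' ∧ ¬ G.Adj k' j' := by
  have main : ∀ N : ℕ, ∀ i : Fin n, (i : ℕ) < N → ∀ k j : Fin n, k < j → j < i →
      G.Adj k i → G.Adj j i → ¬ G.Adj k j →
      ∃ k' j' i' : Fin n, k' < j' ∧ j' < i' ∧
        IsGreatest {x : Fin n | x < i' ∧ G.Adj x i'} j' ∧ G.Adj k' i' ∧ ¬ G.Adj k' j' := by
    intro N
    induction N with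
    | zero => intro i hi; omega
    | succ N ih =>
    intro i hiN k j hkj hji hki hjiadj hnkj
    classical
    set T : Finset (Fin n) := Finset.univ.filter (fun x => x < i ∧ G.Adj x i) with hT
    have hjT : j ∈ T := by simp [hT, hji, hjiadj]
    have hTne : T.Nonempty := ⟨j, hjT⟩
    set m : Fin n := T.max' hTne with hm
    have hmT : m ∈ T := T.max'_mem hTne
    have hmmem : m < i ∧ G.Adj m i := by simpa [hT] using hmT
    have hgreat : IsGreatest {x : Fin n | x < i ∧ G.Adj x i} m := by
      constructor
      · exact hmmem
      · intro x hx
        exact T.le_max' x (by simp [hT, hx.1, hx.2])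
    have hjm : j ≤ m := T.le_max' j hjT
    by_cases hkm : G.Adj k m
    · -- then m ≠ j, so j < m
      have hjm' : j < m := lt_of_le_of_ne hjm (by rintro rfl; exact hnkj hkm)
      by_cases hjmadj : G.Adj j m
      · exact ih m (by have := hmmem.1; omega) k j hkj hjm' hkm hjmadj hnkj
      · exact ⟨j, m, i, hjm', hmmem.1, hgreat, hjiadj, hjmadj⟩
    · exact ⟨k, m, i, lt_of_lt_of_le hkj hjm, hmmem.1, hgreat, hki, hkm⟩
  intro i k j hkj hji hki hjiadj hnkj
  exact main ((i:ℕ)+1) i (by omega) k j hkj hji hki hjiadj hnkj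

/-- Detecting the chordal pattern (k < j < i, ki ∈ E, ji ∈ E, kj ∉ E) is
equivalent to checking each vertex against its rightmost left-neighbor. -/
theorem stmt_1 {n : ℕ} (G : SimpleGraph (Fin n)) :
    (∃ k j i : Fin n, k < j ∧ j < i ∧ G.Adj k i ∧ G.Adj j i ∧ ¬ G.Adj k j) ↔
      (∃ k j i : Fin n, k < j ∧ j < i ∧
        IsGreatest {x : Fin n | x < i ∧ G.Adj x i} j ∧ G.Adj k i ∧ ¬ G.Adj k j) := by
  constructor
  · rintro ⟨k, j, i, hkj, hji, hki, hjiadj, hnkj⟩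
    exact stmt_1_aux G i k j hkj hji hki hjiadj hnkj
  · rintro ⟨k, j, i, hkj, hji, hg, hki, hnkj⟩
    exact ⟨k, j, i, hkj, hji, hki, hg.1.2, hnkj⟩
end

section
/- Let G be a graph on vertex set V. Construct G' on vertex set V × {1,2} by: making v₁v₂ adjacent for every v ∈ V; for every edge uv of G making u₁v₁, u₂v₂, u₁v₂, and v₁u₂ adjacent; and no other adjacencies. Then G contains an independent set of size 3 if and only if G' contains an induced subgraph isomorphic to K₂ + 2K₁ (one edge plus two isolated vertices). -/
/-- G has an independent set of size 3 iff the doubled graph G' on V × Fin 2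
(copies of a vertex adjacent; all four cross copies of an edge adjacent)
contains an induced K₂ + 2K₁ (one edge plus two isolated vertices). -/
theorem stmt_9 {V : Type*} (G : SimpleGraph V) :
    (∃ a b c : V, a ≠ b ∧ a ≠ c ∧ b ≠ c ∧
      ¬ G.Adj a b ∧ ¬ G.Adj a c ∧ ¬ G.Adj b c) ↔
    ∃ f : Fin 4 ↪ V × Fin 2,
      ∀ i j : Fin 4,
        (SimpleGraph.fromRel (fun p q : V × Fin 2 =>
            p.1 = q.1 ∨ G.Adj p.1 q.1)).Adj (f i) (f j) ↔
        (SimpleGraph.fromRel (fun x y : Fin 4 => x = 0 ∧ y = 1)).Adj i j := by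
  constructor
  · rintro ⟨a, b, c, hab, hac, hbc, nab, nac, nbc⟩
    have hinj : Function.Injective (![(a,(0:Fin 2)),(a,1),(b,0),(c,0)]) := by
      intro i j h
      fin_cases i <;> fin_cases j <;>
        simp_all [Prod.ext_iff]
    refine ⟨⟨![(a,0),(a,1),(b,0),(c,0)], hinj⟩, ?_⟩
    intro i j
    fin_cases i <;> fin_cases j <;>
      simp_all [SimpleGraph.fromRel_adj, Prod.ext_iff, hab, hac, hbc,
        hab.symm, hac.symm, hbc.symm, G.adj_comm a b, G.adj_comm a c,
        G.adj_comm b c]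
  · rintro ⟨f, hf⟩
    have key : ∀ i j : Fin 4, i ≠ j →
        ¬ (SimpleGraph.fromRel (fun x y : Fin 4 => x = 0 ∧ y = 1)).Adj i j →
        (f i).1 ≠ (f j).1 ∧ ¬ G.Adj (f i).1 (f j).1 := by
      intro i j hij hadj
      have h := (hf i j).not.mpr hadj
      rw [SimpleGraph.fromRel_adj] at h
      push_neg at h
      have h2 := h (f.injective.ne hij)
      exact ⟨h2.1.1, h2.1.2⟩
    have h02 := key 0 2 (by decide) (by simp [SimpleGraph.fromRel_adj])
    have h03 := key 0 3 (by decide) (by simp [SimpleGraph.fromRel_adj])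
    have h23 := key 2 3 (by decide) (by simp [SimpleGraph.fromRel_adj])
    exact ⟨(f 0).1, (f 2).1, (f 3).1, h02.1, h03.1, h23.1, h02.2, h03.2, h23.2⟩
end

section
/- Let G be a connected graph on at least 2 vertices whose complement is also connected, and suppose that G is prime with respect to modular decomposition (i.e., G equals its own quotient graph, every module being trivial). Then G contains an independent set of size 3 if and only if G contains an induced co-paw (the complement of the paw, i.e., the disjoint union of a path on 3 vertices and an isolated vertex); equivalently, a connected, co-connected prime graph is free of independent sets of size 3 iff it is co-paw-free. -/
/-- A vertex subset M is a module of G: every vertex outside M is adjacent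
to all of M or to none of M. -/
def IsModule {V : Type*} (G : SimpleGraph V) (M : Set V) : Prop :=
  ∀ x ∉ M, (∀ v ∈ M, G.Adj x v) ∨ (∀ v ∈ M, ¬ G.Adj x v)

/-- A connected, co-connected graph on at least two vertices that is prime
with respect to modular decomposition contains an independent set of size 3
iff it contains an induced co-paw (P₃ plus an isolated vertex). -/
theorem stmt_10 {V : Type*} [Fintype V] (G : SimpleGraph V)
    (hcard : 2 ≤ Fintype.card V)
    (hconn : G.Connected) (hcoconn : Gᶜ.Connected)
    (hprime : ∀ M : Set V, IsModule G M →
      M = ∅ ∨ M = Set.univ ∨ ∃ v : V, M = {v}) :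
    (∃ a b c : V, a ≠ b ∧ a ≠ c ∧ b ≠ c ∧
      ¬ G.Adj a b ∧ ¬ G.Adj a c ∧ ¬ G.Adj b c) ↔
    ∃ f : Fin 4 ↪ V, ∀ i j : Fin 4,
      G.Adj (f i) (f j) ↔
        (SimpleGraph.fromRel (fun x y : Fin 4 =>
          (x = 0 ∧ y = 1) ∨ (x = 1 ∧ y = 2))).Adj i j := by
  classical
  constructor
  · rintro ⟨a, b, c, hab, hac, hbc, nab, nac, nbc⟩
    by_contra hno
    -- Work in the complement graph H := Gᶜ. "No induced co-paw in G" = "no induced paw in H".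
    -- L1: no pendant vertex on a triangle in Gᶜ.
    have L1 : ∀ v a b c : V, Gᶜ.Adj a b → Gᶜ.Adj a c → Gᶜ.Adj b c → Gᶜ.Adj v a →
        Gᶜ.Adj v b ∨ Gᶜ.Adj v c := by
      intro v a b c hab hac hbc hva
      by_contra h
      push_neg at h
      obtain ⟨hvb, hvc⟩ := h
      have hvb' : v ≠ b := fun h => hvc (h ▸ hbc)
      have hvc' : v ≠ c := fun h => hvb (h ▸ hbc.symm)
      have hva' : v ≠ a := hva.ne
      have hab' : a ≠ b := hab.ne
      have hac' : a ≠ c := hac.ne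
      have hbc' : b ≠ c := hbc.ne
      -- G-adjacencies among {b, v, c, a}: edges bv, vc only.
      have gvb : G.Adj v b := by
        by_contra h; exact hvb ((G.compl_adj v b).mpr ⟨hvb', h⟩)
      have gvc : G.Adj v c := by
        by_contra h; exact hvc ((G.compl_adj v c).mpr ⟨hvc', h⟩)
      have gab : ¬ G.Adj a b := hab.2
      have gac : ¬ G.Adj a c := hac.2
      have gbc : ¬ G.Adj b c := hbc.2
      have gva : ¬ G.Adj v a := hva.2
      apply hno
      refine ⟨⟨![b, v, c, a], ?_⟩, ?_⟩
      · intro i j hij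
        fin_cases i <;> fin_cases j <;>
          simp_all [Matrix.cons_val_zero, Matrix.cons_val_one] <;>
          first
            | rfl
            | (exfalso; first
                | exact hvb' hij.symm | exact hvb' hij
                | exact hvc' hij.symm | exact hvc' hij
                | exact hva' hij.symm | exact hva' hij
                | exact hab' hij.symm | exact hab' hij
                | exact hac' hij.symm | exact hac' hij
                | exact hbc' hij.symm | exact hbc' hij)
      · intro i j
        change G.Adj (![b, v, c, a] i) (![b, v, c, a] j) ↔ _
        fin_cases i <;> fin_cases j <;>
          simp [SimpleGraph.fromRel_adj, Matrix.cons_val_zero, Matrix.cons_val_one,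
            gvb, gvc, gab, gac, gbc, gva, gvb.symm, gvc.symm,
            G.irrefl] <;>
          first
            | exact fun h => gab h.symm
            | exact fun h => gac h.symm
            | exact fun h => gbc h.symm
            | exact fun h => gva h.symm
            | exact hvb'.symm | exact hvc'.symm | exact hva'.symm
            | exact hab'.symm | exact hac'.symm | exact hbc'.symm
            | skip

    -- Gᶜ-triangle {a,b,c}
    have tab : Gᶜ.Adj a b := (G.compl_adj a b).mpr ⟨hab, nab⟩
    have tac : Gᶜ.Adj a c := (G.compl_adj a c).mpr ⟨hac, nac⟩
    have tbc : Gᶜ.Adj b c := (G.compl_adj b c).mpr ⟨hbc, nbc⟩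
    -- crossing lemma for walks
    have walkT : ∀ (Q : V → Prop) (x y : V), Gᶜ.Walk x y → ¬ Q x → Q y →
        ∃ w' w, Gᶜ.Adj w' w ∧ ¬ Q w' ∧ Q w := by
      intro Q x y p
      induction p with
      | nil => intro h1 h2; exact absurd h2 h1
      | @cons u m y h p ih =>
        intro h1 h2
        by_cases hq : Q m
        · exact ⟨u, m, h, h1, hq⟩
        · exact ih hq h2
    -- every vertex lies in a Gᶜ-triangle
    set T : V → Prop := fun v => ∃ p q, Gᶜ.Adj v p ∧ Gᶜ.Adj v q ∧ Gᶜ.Adj p q with hT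
    have hTa : T a := ⟨b, c, tab, tac, tbc⟩
    have hTstep : ∀ u w, T u → Gᶜ.Adj w u → T w := by
      rintro u w ⟨p, q, hup, huq, hpq⟩ hwu
      rcases L1 w u p q hup huq hpq hwu with h | h
      · exact ⟨u, p, hwu, h, hup⟩
      · exact ⟨u, q, hwu, h, huq⟩
    have hTwalk : ∀ u x : V, T u → Gᶜ.Walk u x → T x := by
      intro u x hu p
      induction p with
      | nil => exact hu
      | @cons u m x h p ih => exact ih (hTstep u m hu h.symm)
    have hTall : ∀ x, T x := fun x => hTwalk a x hTa (hcoconn.preconnected a x).some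
    -- strengthened L1
    have L1' : ∀ a b c w w' : V, Gᶜ.Adj a b → Gᶜ.Adj a c → Gᶜ.Adj b c → Gᶜ.Adj w a →
        Gᶜ.Adj w' w → Gᶜ.Adj w' a ∨ Gᶜ.Adj w' b ∨ Gᶜ.Adj w' c := by
      intro a b c w w' hab hac hbc hwa hww
      rcases L1 w a b c hab hac hbc hwa with h | h
      · rcases L1 w' w a b hwa h hab hww with h' | h'
        · exact Or.inl h'
        · exact Or.inr (Or.inl h')
      · rcases L1 w' w a c hwa h hac hww with h' | h'
        · exact Or.inl h'
        · exact Or.inr (Or.inr h')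
    -- transitivity of (equality or G-adjacency)
    have htrans : ∀ x y z : V, (x = y ∨ G.Adj x y) → (y = z ∨ G.Adj y z) →
        x = z ∨ G.Adj x z := by
      intro x y z h1 h2
      rcases h1 with rfl | h1
      · exact h2
      rcases h2 with rfl | h2
      · exact Or.inr h1
      by_contra hcon
      push_neg at hcon
      obtain ⟨hxz, hxz'⟩ := hcon
      have exz : Gᶜ.Adj x z := (G.compl_adj x z).mpr ⟨hxz, hxz'⟩
      have nyx : ¬ Gᶜ.Adj y x := fun h => h.2 h1.symm
      have nyz : ¬ Gᶜ.Adj y z := fun h => h.2 h2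
      have main : ∀ r, Gᶜ.Adj x r → Gᶜ.Adj z r → False := by
        intro r hxr hzr
        -- triangle {x, z, r} in Gᶜ; y is Gᶜ-nonadjacent to all of it
        have hyr : ¬ Gᶜ.Adj y r := by
          intro h
          rcases L1 y r x z hxr.symm hzr.symm exz h with h' | h'
          · exact nyx h'
          · exact nyz h'
        have hyx' : y ≠ x := fun h => hxz' (h ▸ h2)
        have hyz' : y ≠ z := h2.ne
        have hyr' : y ≠ r := by rintro rfl; exact hxr.2 h1
        set Q : V → Prop := fun v =>
          Gᶜ.Adj v x ∨ Gᶜ.Adj v z ∨ Gᶜ.Adj v r ∨ v = x ∨ v = z ∨ v = r with hQ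
        have hQy : ¬ Q y := by
          simp only [hQ]
          push_neg
          exact ⟨nyx, nyz, hyr, hyx', hyz', hyr'⟩
        have hQx : Q x := Or.inr (Or.inr (Or.inr (Or.inl rfl)))
        obtain ⟨w', w, hww, nQw', Qw⟩ :=
          walkT Q y x (hcoconn.preconnected y x).some hQy hQx
        have : Q w' := by
          rcases Qw with h | h | h | rfl | rfl | rfl
          · rcases L1' x z r w w' exz hxr hzr h hww with h' | h' | h'
            · exact Or.inl h'
            · exact Or.inr (Or.inl h')
            · exact Or.inr (Or.inr (Or.inl h'))
          · rcases L1' z x r w w' exz.symm hzr hxr h hww with h' | h' | h'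
            · exact Or.inr (Or.inl h')
            · exact Or.inl h'
            · exact Or.inr (Or.inr (Or.inl h'))
          · rcases L1' r x z w w' hxr.symm hzr.symm exz h hww with h' | h' | h'
            · exact Or.inr (Or.inr (Or.inl h'))
            · exact Or.inl h'
            · exact Or.inr (Or.inl h')
          · exact Or.inl hww
          · exact Or.inr (Or.inl hww)
          · exact Or.inr (Or.inr (Or.inl hww))
        exact nQw' this
      rcases hTall x with ⟨p, q, hxp, hxq, hpq⟩
      rcases L1 z x p q hxp hxq hpq exz.symm with h | h
      · exact main p hxp h
      · exact main q hxq h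
    -- the closed neighborhood class of a is a module
    set M : Set V := {v | v = a ∨ G.Adj v a} with hM
    have hmod : IsModule G M := by
      intro x hx
      right
      intro v hv hxv
      exact hx (htrans x v a (Or.inr hxv) hv)
    have haM : a ∈ M := Or.inl rfl
    rcases hprime M hmod with h | h | ⟨w, h⟩
    · rw [h] at haM; exact haM
    · have : b ∈ M := h ▸ Set.mem_univ b
      rcases this with h' | h'
      · exact hab h'.symm
      · exact nab h'.symm
    · have haw : a = w := by rw [h] at haM; exact haM
      -- a has a G-neighbor since G is connected and card V ≥ 2
      obtain ⟨v, hv⟩ := Fintype.exists_ne_of_one_lt_card (by omega) a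
      obtain ⟨n, hn⟩ : ∃ n, G.Adj a n := by
        have p := (hconn.preconnected a v).some
        cases p with
        | nil => exact absurd rfl hv
        | cons hadj _ => exact ⟨_, hadj⟩
      have hnM : n ∈ M := Or.inr hn.symm
      rw [h] at hnM
      have hna : n = a := hnM.trans haw.symm
      exact G.irrefl (hna ▸ hn)

  · rintro ⟨f, hf⟩
    refine ⟨f 0, f 2, f 3, f.injective.ne (by decide), f.injective.ne (by decide),
      f.injective.ne (by decide), ?_, ?_, ?_⟩ <;>
    · intro h
      have := (hf _ _).mp h
      simp [SimpleGraph.fromRel_adj] at this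
end

section
/- Let P be a pattern that can be divided into anchored patterns P₁ and P₂ (i.e., the edge sets of P₁,P₂ partition E(P), every vertex shared by P₁ and P₂ is an anchor in both, and no two consecutive vertices of P are such that one belongs only to P₁ and the other only to P₂). If an ordered graph G admits a realization of P₁ and a realization of P₂ that agree on the positions assigned to the shared (active) anchors, then G admits a realization of P. -/
/-- Correctness of the merge operation.  A pattern P on ordered vertices
Fin k with mandatory pairs M and forbidden pairs F (pairs (i,j) with i < j)
is divided into anchored subpatterns (V₁, E₁, A₁) and (V₂, E₂, A₂):
the edge sets E₁, E₂ partition the decided pairs M ∪ F, the vertex sets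
cover Fin k, shared vertices are anchors of both parts, anchors A of P
persist, and no two consecutive vertices of P lie one only in V₁ and the
other only in V₂.  If an ordered graph G admits realizations f₁ of P₁ and
f₂ of P₂ agreeing on the shared (active) anchors, then G admits a
realization of P. -/
theorem stmt_11 {k : ℕ} {W : Type*} [LinearOrder W] (G : SimpleGraph W)
    (M F : Set (Fin k × Fin k))
    (hM : ∀ e ∈ M, e.1 < e.2) (hF : ∀ e ∈ F, e.1 < e.2) (hMF : Disjoint M F)
    (V₁ V₂ A A₁ A₂ : Set (Fin k)) (E₁ E₂ : Set (Fin k × Fin k))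
    (hpart : E₁ ∪ E₂ = M ∪ F) (hdisj : Disjoint E₁ E₂)
    (hE₁ : ∀ e ∈ E₁, e.1 ∈ V₁ ∧ e.2 ∈ V₁)
    (hE₂ : ∀ e ∈ E₂, e.1 ∈ V₂ ∧ e.2 ∈ V₂)
    (hcover : V₁ ∪ V₂ = Set.univ)
    (hA₁ : A₁ ⊆ V₁) (hA₂ : A₂ ⊆ V₂)
    (hshared : V₁ ∩ V₂ ⊆ A₁ ∩ A₂)
    (hanch₁ : A ∩ V₁ ⊆ A₁) (hanch₂ : A ∩ V₂ ⊆ A₂)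
    (hconsec : ∀ i j : Fin k, (i : ℕ) + 1 = (j : ℕ) →
      ¬ ((i ∈ V₁ \ V₂ ∧ j ∈ V₂ \ V₁) ∨ (i ∈ V₂ \ V₁ ∧ j ∈ V₁ \ V₂)))
    (f₁ f₂ : Fin k → W)
    (hmono₁ : ∀ i ∈ V₁, ∀ j ∈ V₁, i < j → f₁ i < f₁ j)
    (hmono₂ : ∀ i ∈ V₂, ∀ j ∈ V₂, i < j → f₂ i < f₂ j)
    (hresp₁ : ∀ e ∈ E₁, (e ∈ M → G.Adj (f₁ e.1) (f₁ e.2)) ∧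
      (e ∈ F → ¬ G.Adj (f₁ e.1) (f₁ e.2)))
    (hresp₂ : ∀ e ∈ E₂, (e ∈ M → G.Adj (f₂ e.1) (f₂ e.2)) ∧
      (e ∈ F → ¬ G.Adj (f₂ e.1) (f₂ e.2)))
    (hagree : ∀ x ∈ V₁ ∩ V₂, f₁ x = f₂ x) :
    ∃ g : Fin k → W, StrictMono g ∧
      (∀ e ∈ M, G.Adj (g e.1) (g e.2)) ∧
      (∀ e ∈ F, ¬ G.Adj (g e.1) (g e.2)) := by
  classical
  set g : Fin k → W := fun i => if i ∈ V₁ then f₁ i else f₂ i with hg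
  have hcov : ∀ i : Fin k, i ∈ V₁ ∨ i ∈ V₂ := by
    intro i
    have : i ∈ V₁ ∪ V₂ := by rw [hcover]; trivial
    exact this
  have hg1 : ∀ x ∈ V₁, g x = f₁ x := by
    intro x hx; simp [hg, hx]
  have hg2 : ∀ x ∈ V₂, g x = f₂ x := by
    intro x hx
    by_cases h1 : x ∈ V₁
    · simp [hg, h1, hagree x ⟨h1, hx⟩]
    · simp [hg, h1]
  have hstep : ∀ i j : Fin k, (i : ℕ) + 1 = (j : ℕ) → g i < g j := by
    intro i j hij
    have hlt : i < j := by
      rw [Fin.lt_def]; omega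
    by_cases h1 : i ∈ V₁
    · by_cases h2 : j ∈ V₁
      · rw [hg1 i h1, hg1 j h2]; exact hmono₁ i h1 j h2 hlt
      · have hj2 : j ∈ V₂ := (hcov j).resolve_left h2
        have hi2 : i ∈ V₂ := by
          by_contra hi2
          exact hconsec i j hij (Or.inl ⟨⟨h1, hi2⟩, ⟨hj2, h2⟩⟩)
        rw [hg2 i hi2, hg2 j hj2]; exact hmono₂ i hi2 j hj2 hlt
    · have hi2 : i ∈ V₂ := (hcov i).resolve_left h1
      have hj2 : j ∈ V₂ := by
        by_contra hj2
        have hj1 : j ∈ V₁ := (hcov j).resolve_right hj2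
        exact hconsec i j hij (Or.inr ⟨⟨hi2, h1⟩, ⟨hj1, hj2⟩⟩)
      rw [hg2 i hi2, hg2 j hj2]; exact hmono₂ i hi2 j hj2 hlt
  have hsm : StrictMono g := by
    cases k with
    | zero => intro a; exact absurd a.2 (by omega)
    | succ n =>
      rw [Fin.strictMono_iff_lt_succ]
      intro i
      exact hstep i.castSucc i.succ (by simp)
  have hresp : ∀ e ∈ M ∪ F, (e ∈ M → G.Adj (g e.1) (g e.2)) ∧
      (e ∈ F → ¬ G.Adj (g e.1) (g e.2)) := by
    intro e he
    rw [← hpart] at he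
    rcases he with he | he
    · obtain ⟨h1, h2⟩ := hE₁ e he
      rw [hg1 _ h1, hg1 _ h2]
      exact hresp₁ e he
    · obtain ⟨h1, h2⟩ := hE₂ e he
      rw [hg2 _ h1, hg2 _ h2]
      exact hresp₂ e he
  exact ⟨g, hsm, fun e he => (hresp e (Or.inl he)).1 he,
    fun e he => (hresp e (Or.inr he)).2 he⟩
end
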